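/- Let X and Y be self-adjoint linear operators on a finite-dimensional inner product space H with 0 ≤ X ≤ Y. Then Y⁺ ≤ X⁺ (where ⁺ denotes the Moore–Penrose pseudoinverse) if and only if ker Y = ker X. -/

import Mathlib

/-!
Penrose's equations determine `a⁺` uniquely, so for self-adjoint `a` the inverse `a⁺` is
self-adjoint, commutes with `a`, and `ker a⁺ = ker a`. For operators, `0 ≤ A ≤ B` forces
`ker B ≤ ker A`. This gives `ker Y ≤ ker X`, and, applied to `0 ≤ Y⁺ ≤ X⁺`, also
`ker X = ker X⁺ ≤ ker Y⁺ = ker Y`. Conversely, if `ker X ≤ ker Y` then `X X⁺` is the identity on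
the range of `Y`, so `Y⁺ X X⁺ = Y⁺`, and with `D = X⁺ - Y⁺` this gives
`X⁺ - Y⁺ = D X D + Y⁺ (Y - X) Y⁺`, a sum of positive operators.
-/

structure IsMoorePenroseInverse {R : Type*} [Mul R] [Star R] (a b : R) : Prop where
  pinv_mul_mul : b * (a * b) = b
  mul_pinv_mul : a * (b * a) = a
  isSelfAdjoint_pinv_mul : IsSelfAdjoint (b * a)
  isSelfAdjoint_mul_pinv : IsSelfAdjoint (a * b)

namespace IsMoorePenroseInverse

variable {R : Type*} [Monoid R] [StarMul R] {a b c : R}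

theorem symm (h : IsMoorePenroseInverse a b) : IsMoorePenroseInverse b a :=
  ⟨h.mul_pinv_mul, h.pinv_mul_mul, h.isSelfAdjoint_mul_pinv, h.isSelfAdjoint_pinv_mul⟩

protected theorem star (h : IsMoorePenroseInverse a b) :
    IsMoorePenroseInverse (star a) (star b) where
  pinv_mul_mul := by rw [← star_mul, ← star_mul, mul_assoc, h.pinv_mul_mul]
  mul_pinv_mul := by rw [← star_mul, ← star_mul, mul_assoc, h.mul_pinv_mul]
  isSelfAdjoint_pinv_mul := by
    rw [← star_mul]; exact IsSelfAdjoint.star_iff.2 h.isSelfAdjoint_mul_pinv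
  isSelfAdjoint_mul_pinv := by
    rw [← star_mul]; exact IsSelfAdjoint.star_iff.2 h.isSelfAdjoint_pinv_mul

theorem mul_pinv_eq (hb : IsMoorePenroseInverse a b) (hc : IsMoorePenroseInverse a c) :
    a * b = a * c :=
  calc a * b = a * c * (a * b) := by rw [← mul_assoc, mul_assoc a c a, hc.mul_pinv_mul]
    _ = star (a * c) * star (a * b) := by
      rw [hc.isSelfAdjoint_mul_pinv.star_eq, hb.isSelfAdjoint_mul_pinv.star_eq]
    _ = star (a * c) := by rw [← star_mul, ← mul_assoc, mul_assoc a b a, hb.mul_pinv_mul]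
    _ = a * c := hc.isSelfAdjoint_mul_pinv.star_eq

theorem pinv_mul_eq (hb : IsMoorePenroseInverse a b) (hc : IsMoorePenroseInverse a c) :
    b * a = c * a :=
  star_injective <| by rw [star_mul, star_mul, hb.star.mul_pinv_eq hc.star]

theorem unique (hb : IsMoorePenroseInverse a b) (hc : IsMoorePenroseInverse a c) : b = c :=
  calc b = b * (a * c) := by rw [← hb.mul_pinv_eq hc, hb.pinv_mul_mul]
    _ = c := by rw [← mul_assoc, hb.pinv_mul_eq hc, mul_assoc, hc.pinv_mul_mul]

theorem isSelfAdjoint (h : IsMoorePenroseInverse a b) (ha : IsSelfAdjoint a) :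
    IsSelfAdjoint b := by
  have h' := h.star
  rw [ha.star_eq] at h'
  exact (h.unique h').symm

theorem commute (h : IsMoorePenroseInverse a b) (ha : IsSelfAdjoint a) : Commute a b := by
  rw [Commute, SemiconjBy, ← h.isSelfAdjoint_mul_pinv.star_eq, star_mul,
    (h.isSelfAdjoint ha).star_eq, ha.star_eq]

theorem pinv_mul_pinv_mul (h : IsMoorePenroseInverse a b) (ha : IsSelfAdjoint a) :
    b * (b * a) = b := by
  rw [← (h.commute ha).eq, h.pinv_mul_mul]

theorem pinv_mul_eq_pinv_of_mul_eq (h : IsMoorePenroseInverse a b) (ha : IsSelfAdjoint a)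
    {p : R} (hp : a * p = a) : b * p = b :=
  calc b * p = b * (b * (a * p)) := by rw [← mul_assoc b a, ← mul_assoc, h.pinv_mul_pinv_mul ha]
    _ = b := by rw [hp, h.pinv_mul_pinv_mul ha]

end IsMoorePenroseInverse

namespace LinearMap

open RCLike

variable {𝕜 E : Type*} [RCLike 𝕜] [NormedAddCommGroup E] [InnerProductSpace 𝕜 E]

local notation "⟪" x ", " y "⟫" => inner 𝕜 x y

theorem IsPositive.apply_eq_zero_of_re_inner_eq_zero {T : E →ₗ[𝕜] E} (hT : T.IsPositive)
    {x : E} (hx : re ⟪T x, x⟫ = 0) : T x = 0 := by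
  have hquad : ∀ t : ℝ, 0 ≤ re ⟪T (T x), T x⟫ * (t * t) + 2 * ‖T x‖ ^ 2 * t + 0 := by
    intro t
    have h := hT.re_inner_nonneg_left (x + (t : 𝕜) • T x)
    rw [map_add, map_smul, inner_add_left, inner_add_right, inner_add_right, inner_smul_left,
      inner_smul_right, inner_smul_left, inner_smul_right, hT.isSymmetric (T x) x, conj_ofReal] at h
    simp only [map_add, re_ofReal_mul, hx, inner_self_eq_norm_sq] at h
    linarith
  have h := discrim_le_zero hquad
  rw [discrim] at h
  have : ‖T x‖ ^ 4 ≤ 0 := by nlinarith [hT.re_inner_nonneg_left (T x)]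
  simpa using le_antisymm this (by positivity)

theorem le_iff_re_inner_le {A B : E →ₗ[𝕜] E} (hA : A.IsSymmetric) (hB : B.IsSymmetric) :
    A ≤ B ↔ ∀ v, re ⟪v, A v⟫ ≤ re ⟪v, B v⟫ := by
  simp only [le_def, IsPositive, hB.sub hA, true_and, sub_apply, inner_sub_left, map_sub,
    sub_nonneg, inner_re_symm (𝕜 := 𝕜) (A _), inner_re_symm (𝕜 := 𝕜) (B _)]

theorem ker_le_ker_of_le {A B : E →ₗ[𝕜] E} (hA : 0 ≤ A) (hAB : A ≤ B) : ker B ≤ ker A := by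
  intro v hv
  rw [nonneg_iff_isPositive] at hA
  have hle := hAB.2 v
  rw [sub_apply, mem_ker.1 hv, zero_sub, inner_neg_left, map_neg, neg_nonneg] at hle
  exact hA.apply_eq_zero_of_re_inner_eq_zero (le_antisymm hle (hA.re_inner_nonneg_left v))

end LinearMap

namespace IsMoorePenroseInverse

open LinearMap

variable {𝕜 E : Type*} [RCLike 𝕜] [NormedAddCommGroup E] [InnerProductSpace 𝕜 E]
  [FiniteDimensional 𝕜 E] {A B : E →ₗ[𝕜] E}

theorem ker_le_ker_pinv (h : IsMoorePenroseInverse A B) (hA : IsSelfAdjoint A) :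
    ker A ≤ ker B := by
  intro v hv
  rw [mem_ker, ← h.pinv_mul_pinv_mul hA, Module.End.mul_apply, Module.End.mul_apply,
    mem_ker.1 hv, map_zero, map_zero]

theorem ker_pinv (h : IsMoorePenroseInverse A B) (hA : IsSelfAdjoint A) : ker B = ker A :=
  le_antisymm (h.symm.ker_le_ker_pinv (h.isSelfAdjoint hA)) (h.ker_le_ker_pinv hA)

theorem mul_mul_pinv_of_ker_le (h : IsMoorePenroseInverse A B) (hA : IsSelfAdjoint A)
    {C : E →ₗ[𝕜] E} (hC : ker A ≤ ker C) : C * (A * B) = C := by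
  ext z
  have hz : z - A (B z) ∈ ker A := by
    rw [mem_ker, map_sub, ← Module.End.mul_apply, ← Module.End.mul_apply, mul_assoc,
      h.symm.pinv_mul_pinv_mul (h.isSelfAdjoint hA), sub_self]
  rw [Module.End.mul_apply, Module.End.mul_apply, eq_comm, ← sub_eq_zero, ← map_sub]
  exact hC hz

theorem nonneg (h : IsMoorePenroseInverse A B) (hA : 0 ≤ A) : 0 ≤ B := by
  rw [nonneg_iff_isPositive] at hA ⊢
  have hB : B.adjoint = B := h.isSelfAdjoint hA.isSelfAdjoint
  have hBAB := hA.conj_adjoint B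
  rw [hB] at hBAB
  rw [← h.pinv_mul_mul]
  exact hBAB

end IsMoorePenroseInverse

namespace LinearMap

variable {𝕜 E : Type*} [RCLike 𝕜] [NormedAddCommGroup E] [InnerProductSpace 𝕜 E]
  [FiniteDimensional 𝕜 E]

theorem pinv_le_pinv_of_ker_le {X Y Xp Yp : E →ₗ[𝕜] E} (hX : 0 ≤ X) (hXY : X ≤ Y)
    (hXp : IsMoorePenroseInverse X Xp) (hYp : IsMoorePenroseInverse Y Yp) (hker : ker X ≤ ker Y) :
    Yp ≤ Xp := by
  have hXsa : IsSelfAdjoint X := ((nonneg_iff_isPositive X).1 hX).isSelfAdjoint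
  have hYsa : IsSelfAdjoint Y := ((nonneg_iff_isPositive Y).1 (hX.trans hXY)).isSelfAdjoint
  have hXpsa := hXp.isSelfAdjoint hXsa
  have hYpsa := hYp.isSelfAdjoint hYsa
  have hYpXXp : Yp * X * Xp = Yp := by
    rw [mul_assoc, hYp.pinv_mul_eq_pinv_of_mul_eq hYsa (hXp.mul_mul_pinv_of_ker_le hXsa hker)]
  have hXpXYp : Xp * X * Yp = Yp := by
    simpa only [star_mul, hXpsa.star_eq, hXsa.star_eq, hYpsa.star_eq, mul_assoc] using
      congrArg star hYpXXp
  have hXpXXp : Xp * X * Xp = Xp := by rw [mul_assoc, hXp.pinv_mul_mul]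
  have hYpYYp : Yp * Y * Yp = Yp := by rw [mul_assoc, hYp.pinv_mul_mul]
  have key : Xp - Yp = (Xp - Yp) * (X * star (Xp - Yp)) + Yp * ((Y - X) * star Yp) := by
    rw [star_sub, hXpsa.star_eq, hYpsa.star_eq]
    simp only [mul_sub, sub_mul, ← mul_assoc, hYpXXp, hXpXYp, hXpXXp, hYpYYp]
    abel
  rw [le_def, key]
  exact (((nonneg_iff_isPositive X).1 hX).conj_adjoint _).add (hXY.conj_adjoint _)

theorem pinv_le_pinv_iff_ker_eq {X Y Xp Yp : E →ₗ[𝕜] E} (hX : 0 ≤ X) (hXY : X ≤ Y)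
    (hXp : IsMoorePenroseInverse X Xp) (hYp : IsMoorePenroseInverse Y Yp) :
    Yp ≤ Xp ↔ ker Y = ker X := by
  have hY : 0 ≤ Y := hX.trans hXY
  have hXsa : IsSelfAdjoint X := ((nonneg_iff_isPositive X).1 hX).isSelfAdjoint
  have hYsa : IsSelfAdjoint Y := ((nonneg_iff_isPositive Y).1 hY).isSelfAdjoint
  refine ⟨fun h ↦ le_antisymm (ker_le_ker_of_le hX hXY) ?_,
    fun h ↦ pinv_le_pinv_of_ker_le hX hXY hXp hYp h.ge⟩
  rw [← hXp.ker_pinv hXsa, ← hYp.ker_pinv hYsa]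
  exact ker_le_ker_of_le (hYp.nonneg hY) h

end LinearMap

/-- Pseudoinverse order reversal: let `X`, `Y` be self-adjoint operators
on a finite-dimensional inner product space `H` with `0 ≤ X ≤ Y` (in the sense of real
quadratic forms), and let `Xp = X⁺`, `Yp = Y⁺` be their Moore–Penrose pseudoinverses
(characterized by the four Penrose equations).  Then `Y⁺ ≤ X⁺` if and only if
`ker Y = ker X`. -/
theorem stmt_14
    {𝕂 : Type*} [RCLike 𝕂]
    {H : Type*} [NormedAddCommGroup H] [InnerProductSpace 𝕂 H] [FiniteDimensional 𝕂 H]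
    (X Y : H →ₗ[𝕂] H)
    (hXsa : LinearMap.adjoint X = X) (hYsa : LinearMap.adjoint Y = Y)
    (hXpos : ∀ v : H, 0 ≤ RCLike.re (inner 𝕂 v (X v) : 𝕂))
    (hXY : ∀ v : H, RCLike.re (inner 𝕂 v (X v) : 𝕂) ≤ RCLike.re (inner 𝕂 v (Y v) : 𝕂))
    (Xp : H →ₗ[𝕂] H)
    (hXp1 : Xp ∘ₗ (X ∘ₗ Xp) = Xp) (hXp2 : X ∘ₗ (Xp ∘ₗ X) = X)
    (hXp3 : LinearMap.adjoint (Xp ∘ₗ X) = Xp ∘ₗ X)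
    (hXp4 : LinearMap.adjoint (X ∘ₗ Xp) = X ∘ₗ Xp)
    (Yp : H →ₗ[𝕂] H)
    (hYp1 : Yp ∘ₗ (Y ∘ₗ Yp) = Yp) (hYp2 : Y ∘ₗ (Yp ∘ₗ Y) = Y)
    (hYp3 : LinearMap.adjoint (Yp ∘ₗ Y) = Yp ∘ₗ Y)
    (hYp4 : LinearMap.adjoint (Y ∘ₗ Yp) = Y ∘ₗ Yp) :
    (∀ v : H, RCLike.re (inner 𝕂 v (Yp v) : 𝕂) ≤ RCLike.re (inner 𝕂 v (Xp v) : 𝕂)) ↔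
      LinearMap.ker Y = LinearMap.ker X := by
  have hXs : X.IsSymmetric := (LinearMap.isSymmetric_iff_isSelfAdjoint X).2 hXsa
  have hYs : Y.IsSymmetric := (LinearMap.isSymmetric_iff_isSelfAdjoint Y).2 hYsa
  have hXp : IsMoorePenroseInverse X Xp := ⟨hXp1, hXp2, hXp3, hXp4⟩
  have hYp : IsMoorePenroseInverse Y Yp := ⟨hYp1, hYp2, hYp3, hYp4⟩
  have hXps : Xp.IsSymmetric :=
    (LinearMap.isSymmetric_iff_isSelfAdjoint Xp).2 (hXp.isSelfAdjoint hXsa)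
  have hYps : Yp.IsSymmetric :=
    (LinearMap.isSymmetric_iff_isSelfAdjoint Yp).2 (hYp.isSelfAdjoint hYsa)
  have hX : 0 ≤ X := (LinearMap.le_iff_re_inner_le .zero hXs).2 (by simpa using hXpos)
  have hXY' : X ≤ Y := (LinearMap.le_iff_re_inner_le hXs hYs).2 hXY
  rw [← LinearMap.le_iff_re_inner_le hYps hXps]
  exact LinearMap.pinv_le_pinv_iff_ker_eq hX hXY' hXp hYp
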